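/- Let H'_m be obtained from H_m by flipping the sign of all couplings from the sites u₁ and v₁ to the environment (i.e., the coupling block to the first copy becomes −(1/√2)C). Then for all t, |⟨u₋| exp(i H'_m t) |v₋⟩|² = |⟨u| exp(i H t) |v⟩|², where |u₋⟩ = (|u₁⟩−|u₂⟩)/√2 and |v₋⟩ = (|v₁⟩−|v₂⟩)/√2. -/

import Mathlib

open Matrix

/-- The original Hamiltonian: cloud `D`, coupling `C = H_{S̄S}`, diagonal `E • I₂` on
`S = {u,v}` (no direct `u`–`v` coupling). -/
def origH {β : Type} [Fintype β] [DecidableEq β]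
    (D : Matrix β β ℝ) (C : Matrix β (Fin 2) ℝ) (E : ℝ) :
    Matrix (β ⊕ Fin 2) (β ⊕ Fin 2) ℝ :=
  Matrix.fromBlocks D C Cᵀ (E • 1)

/-- Coupling block after the quench: coupling `−C/√2` to the first copy and `+C/√2`
to the second copy. -/
noncomputable def quenchC {β : Type} (C : Matrix β (Fin 2) ℝ) :
    Matrix β (Fin 2 ⊕ Fin 2) ℝ :=
  Matrix.of fun i s =>
    Sum.elim (fun a => -(C i a / Real.sqrt 2)) (fun a => C i a / Real.sqrt 2) s

/-- The quenched dimerized Hamiltonian `H'_m`, with sign-flipped couplings from the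
sites `u₁`, `v₁` to the environment. -/
noncomputable def quenchH {β : Type} [Fintype β] [DecidableEq β]
    (D : Matrix β β ℝ) (C : Matrix β (Fin 2) ℝ) (E : ℝ) :
    Matrix (β ⊕ (Fin 2 ⊕ Fin 2)) (β ⊕ (Fin 2 ⊕ Fin 2)) ℝ :=
  Matrix.fromBlocks D (quenchC C) (quenchC C)ᵀ
    (Matrix.fromBlocks (E • 1) 0 0 (E • 1))

/-- The antisymmetric dimer state `|u₋⟩ = (|u₁⟩ − |u₂⟩)/√2` (as a complex vector). -/
noncomputable def uMinusC (β : Type) : (β ⊕ (Fin 2 ⊕ Fin 2)) → ℂ :=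
  Sum.elim 0 (Sum.elim ![((Real.sqrt 2 : ℝ) : ℂ)⁻¹, 0]
    ![-((Real.sqrt 2 : ℝ) : ℂ)⁻¹, 0])

/-- The antisymmetric dimer state `|v₋⟩ = (|v₁⟩ − |v₂⟩)/√2` (as a complex vector). -/
noncomputable def vMinusC (β : Type) : (β ⊕ (Fin 2 ⊕ Fin 2)) → ℂ :=
  Sum.elim 0 (Sum.elim ![0, ((Real.sqrt 2 : ℝ) : ℂ)⁻¹]
    ![0, -((Real.sqrt 2 : ℝ) : ℂ)⁻¹])

open NormedSpace

/-- The lower-right block of the isometry mapping the original configuration space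
into the dimerized one: `x ↦ (−x/√2, x/√2)`. -/
noncomputable def Vd : Matrix (Fin 2 ⊕ Fin 2) (Fin 2) ℂ :=
  Matrix.of (Sum.elim
    (fun a b => -(((Real.sqrt 2 : ℝ) : ℂ)⁻¹ * (1 : Matrix (Fin 2) (Fin 2) ℂ) a b))
    (fun a b => ((Real.sqrt 2 : ℝ) : ℂ)⁻¹ * (1 : Matrix (Fin 2) (Fin 2) ℂ) a b))

lemma sC_mul_sC : (((Real.sqrt 2 : ℝ) : ℂ)⁻¹ * ((Real.sqrt 2 : ℝ) : ℂ)⁻¹) = (2 : ℂ)⁻¹ := by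
  rw [← mul_inv, ← Complex.ofReal_mul, Real.mul_self_sqrt (by norm_num)]
  norm_num

lemma Vd_tVd : Vdᵀ * Vd = 1 := by
  ext a b
  simp only [Vd, Matrix.mul_apply, Fintype.sum_sum_type, Matrix.transpose_apply, Matrix.of_apply,
    Sum.elim_inl, Sum.elim_inr, neg_mul, mul_neg, neg_neg, Matrix.one_apply]
  rw [← Finset.sum_add_distrib]
  simp only [← two_mul, mul_mul_mul_comm, sC_mul_sC]
  fin_cases a <;> fin_cases b <;> simp [Fin.sum_univ_two, sC_mul_sC]

/-- The isometry `V : ℂ^(β⊕2) → ℂ^(β⊕(2⊕2))`, identity on the cloud and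
`x ↦ (−x/√2, x/√2)` on the sites. -/
noncomputable def Vmat (β : Type) [Fintype β] [DecidableEq β] :
    Matrix (β ⊕ (Fin 2 ⊕ Fin 2)) (β ⊕ Fin 2) ℂ :=
  Matrix.fromBlocks 1 0 0 Vd

lemma intertwine {β : Type} [Fintype β] [DecidableEq β]
    (D : Matrix β β ℝ) (C : Matrix β (Fin 2) ℝ) (E : ℝ) :
    ((quenchH D C E).map Complex.ofReal) * Vmat β
      = Vmat β * ((origH D C E).map Complex.ofReal) := by
  have h2 : ((Real.sqrt 2 : ℝ) : ℂ) ≠ 0 := by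
    exact_mod_cast Complex.ofReal_ne_zero.2 (by positivity)
  have hsq : ((Real.sqrt 2 : ℝ) : ℂ) ^ 2 = 2 := by
    rw [← Complex.ofReal_pow, Real.sq_sqrt (by norm_num : (2:ℝ) ≥ 0)]; norm_num
  ext p q
  rcases p with i | (a | a) <;> rcases q with j | b <;>
    simp [quenchH, origH, quenchC, Vmat, Vd, Matrix.mul_apply, Fintype.sum_sum_type,
      Matrix.one_apply, Matrix.smul_apply, mul_ite, ite_mul, Fin.sum_univ_two,
      Matrix.fromBlocks_apply₁₁, Matrix.fromBlocks_apply₁₂, Matrix.fromBlocks_apply₂₁,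
      Matrix.fromBlocks_apply₂₂, Finset.sum_ite_eq, Finset.sum_ite_eq']
  all_goals try fin_cases b
  all_goals try simp [Matrix.one_apply, Matrix.smul_apply]
  all_goals try field_simp
  all_goals try ring_nf
  all_goals simp [hsq]
  all_goals try ring

lemma exp_intertwine {n m : Type} [Fintype n] [DecidableEq n] [Fintype m] [DecidableEq m]
    (A : Matrix n n ℂ) (B : Matrix m m ℂ) (V : Matrix n m ℂ) (h : A * V = V * B) :
    exp A * V = V * exp B := by
  have hpow : ∀ k : ℕ, A ^ k * V = V * B ^ k := by
    intro k; induction k with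
    | zero => simp
    | succ k ih =>
        calc A ^ (k+1) * V = A ^ k * (A * V) := by rw [pow_succ, Matrix.mul_assoc]
        _ = (A ^ k * V) * B := by rw [h, Matrix.mul_assoc]
        _ = V * B ^ (k+1) := by rw [ih, pow_succ, Matrix.mul_assoc]
  have hA : Summable (fun k : ℕ => ((k.factorial : ℂ))⁻¹ • A ^ k) := by
    letI : SeminormedRing (Matrix n n ℂ) := Matrix.linftyOpSemiNormedRing
    letI : NormedRing (Matrix n n ℂ) := Matrix.linftyOpNormedRing
    letI : NormedAlgebra ℂ (Matrix n n ℂ) := Matrix.linftyOpNormedAlgebra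
    exact expSeries_summable' A
  have hB : Summable (fun k : ℕ => ((k.factorial : ℂ))⁻¹ • B ^ k) := by
    letI : SeminormedRing (Matrix m m ℂ) := Matrix.linftyOpSemiNormedRing
    letI : NormedRing (Matrix m m ℂ) := Matrix.linftyOpNormedRing
    letI : NormedAlgebra ℂ (Matrix m m ℂ) := Matrix.linftyOpNormedAlgebra
    exact expSeries_summable' B
  let L : Matrix n n ℂ →L[ℂ] Matrix n m ℂ :=
    { toFun := fun X => X * V
      map_add' := fun X Y => Matrix.add_mul X Y V
      map_smul' := fun c X => Matrix.smul_mul c X V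
      cont := continuous_id.matrix_mul continuous_const }
  let R : Matrix m m ℂ →L[ℂ] Matrix n m ℂ :=
    { toFun := fun X => V * X
      map_add' := fun X Y => Matrix.mul_add V X Y
      map_smul' := fun c X => Matrix.mul_smul V c X
      cont := continuous_const.matrix_mul continuous_id }
  have : L (exp A) = R (exp B) := by
    rw [exp_eq_tsum ℂ, exp_eq_tsum ℂ, L.map_tsum hA, R.map_tsum hB]
    congr 1
    funext k
    show ((k.factorial : ℂ))⁻¹ • (A ^ k) * V = V * ((k.factorial : ℂ))⁻¹ • (B ^ k)
    rw [Matrix.smul_mul, Matrix.mul_smul, hpow]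
  exact this

lemma uMinus_eq (β : Type) [Fintype β] [DecidableEq β] :
    uMinusC β = -((Vmat β) *ᵥ Pi.single (Sum.inr 0 : β ⊕ Fin 2) 1) := by
  funext p
  rcases p with i | (a | a) <;> try fin_cases a
  all_goals simp [uMinusC, Vmat, Vd, Matrix.mulVec_single, Matrix.one_apply]

lemma vMinus_eq (β : Type) [Fintype β] [DecidableEq β] :
    vMinusC β = -((Vmat β) *ᵥ Pi.single (Sum.inr 1 : β ⊕ Fin 2) 1) := by
  funext p
  rcases p with i | (a | a) <;> try fin_cases a
  all_goals simp [vMinusC, Vmat, Vd, Matrix.mulVec_single, Matrix.one_apply]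

lemma VtV (β : Type) [Fintype β] [DecidableEq β] : (Vmat β)ᵀ * Vmat β = 1 := by
  unfold Vmat
  rw [Matrix.fromBlocks_transpose, Matrix.fromBlocks_multiply]
  simp [Vd_tVd, Matrix.fromBlocks_one]

/-- Under the quenched Hamiltonian `H'_m`, the transfer fidelity of the antisymmetric
dimer states equals the original single-site transfer fidelity:
`|⟨u₋| exp(i H'_m t) |v₋⟩|² = |⟨u| exp(i H t) |v⟩|²` for all `t`. -/
theorem quenched_cls_fidelity_eq {β : Type} [Fintype β] [DecidableEq β]
    (D : Matrix β β ℝ) (hD : D.IsSymm) (C : Matrix β (Fin 2) ℝ) (E : ℝ) :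
    ∀ t : ℝ,
      ‖(dotProduct (uMinusC β)
          ((NormedSpace.exp ((Complex.I * (t : ℂ)) •
              ((quenchH D C E).map Complex.ofReal))).mulVec (vMinusC β)))‖ ^ 2 =
      ‖((NormedSpace.exp ((Complex.I * (t : ℂ)) •
          ((origH D C E).map Complex.ofReal))) (Sum.inr 0) (Sum.inr 1))‖ ^ 2 := by
  intro t
  set A := (Complex.I * (t : ℂ)) • ((quenchH D C E).map Complex.ofReal) with hA
  set B := (Complex.I * (t : ℂ)) • ((origH D C E).map Complex.ofReal) with hB
  have hIW : A * Vmat β = Vmat β * B := by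
    rw [hA, hB, Matrix.smul_mul, Matrix.mul_smul, intertwine]
  have hexp : exp A * Vmat β = Vmat β * exp B := exp_intertwine _ _ _ hIW
  have key : ∀ (a w : (β ⊕ Fin 2) → ℂ),
      (Vmat β *ᵥ a) ⬝ᵥ (Vmat β *ᵥ w) = a ⬝ᵥ w := by
    intro a w
    rw [dotProduct_comm, Matrix.dotProduct_mulVec, ← Matrix.mulVec_transpose,
      Matrix.mulVec_mulVec, VtV, Matrix.one_mulVec, dotProduct_comm]
  have main : dotProduct (uMinusC β) ((exp A).mulVec (vMinusC β))
      = (exp B) (Sum.inr 0) (Sum.inr 1) := by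
    rw [uMinus_eq, vMinus_eq, Matrix.mulVec_neg, dotProduct_neg,
      neg_dotProduct, neg_neg, Matrix.mulVec_mulVec, hexp,
      ← Matrix.mulVec_mulVec, key]
    simp [Matrix.mulVec_single, single_dotProduct]
  rw [main]
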